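/- Let p be a prime, n ≥ 1, V = (ZMod p)^n, and let f be a group automorphism of V. Equip V with the affine quandle operation x * y = x + f(y − x), and assume this quandle is simple: its only congruences are the equality relation and the all relation. If g : V → V is a bijection preserving * (a quandle automorphism) whose order is finite and coprime to p, then g has a fixed point. -/

import Mathlib

/-- A quandle structure on `Q`, given by its left translations: each `L x` is a
permutation of `Q`, `x * x = x`, and `x * (y * z) = (x * y) * (x * z)`
(writing `x * y` for `L x y`). -/
structure QuandleStr (Q : Type*) where
  L : Q → Equiv.Perm Q
  idem : ∀ x : Q, L x x = x
  selfDistrib : ∀ x y z : Q, L x (L y z) = L (L x y) (L x z)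

namespace QuandleStr

variable {Q : Type*} (S : QuandleStr Q)

/-- The left multiplication group `LMlt(Q)`, generated by all left translations. -/
def Lmlt : Subgroup (Equiv.Perm Q) :=
  Subgroup.closure (Set.range S.L)

/-- The displacement group `Dis(Q)`, generated by all `L x * (L y)⁻¹`. -/
def Dis : Subgroup (Equiv.Perm Q) :=
  Subgroup.closure {g : Equiv.Perm Q | ∃ x y : Q, g = S.L x * (S.L y)⁻¹}

/-- A congruence of the quandle: an equivalence relation compatible with `*` and `\`. -/
def IsCong (θ : Setoid Q) : Prop :=
  ∀ x y u v : Q, θ.r x y → θ.r u v →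
    θ.r (S.L x u) (S.L y v) ∧ θ.r ((S.L x)⁻¹ u) ((S.L y)⁻¹ v)

/-- A quandle is faithful if `x ↦ L x` is injective. -/
def Faithful : Prop := Function.Injective S.L

/-- A quandle is connected if `LMlt(Q)` acts transitively. -/
def Connected : Prop := ∀ x y : Q, ∃ g ∈ S.Lmlt, g x = y

/-- A quandle is latin if all right translations are bijective. -/
def Latin : Prop := ∀ y : Q, Function.Bijective fun x : Q => S.L x y

/-- `θ` is a minimal congruence: not equality, and the only congruence strictly
contained in it is equality. -/
def IsMinCong (θ : Setoid Q) : Prop :=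
  S.IsCong θ ∧ θ ≠ ⊥ ∧ ∀ β : Setoid Q, S.IsCong β → β < θ → β = ⊥

/-- `θ` is a maximal congruence: not the all relation, and the only congruence strictly
containing it is the all relation. -/
def IsMaxCong (θ : Setoid Q) : Prop :=
  S.IsCong θ ∧ θ ≠ ⊤ ∧ ∀ β : Setoid Q, S.IsCong β → θ < β → β = ⊤

/-- `Dis_α`: the subgroup generated by the `L x * (L y)⁻¹` with `x α y`. -/
def DisC (r : Q → Q → Prop) : Subgroup (Equiv.Perm Q) :=
  Subgroup.closure {g : Equiv.Perm Q | ∃ x y : Q, r x y ∧ g = S.L x * (S.L y)⁻¹}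

/-- `Dis^α`: the elements of `Dis(Q)` displacing every point inside its `α`-class. -/
def DisUp (θ : Setoid Q) : Subgroup (Equiv.Perm Q) where
  carrier := {g : Equiv.Perm Q | g ∈ S.Dis ∧ ∀ x : Q, θ.r (g x) x}
  one_mem' := ⟨S.Dis.one_mem, fun x => θ.iseqv.refl x⟩
  mul_mem' := by
    rintro a b ⟨ha, ha2⟩ ⟨hb, hb2⟩
    refine ⟨S.Dis.mul_mem ha hb, fun x => ?_⟩
    rw [Equiv.Perm.mul_apply]
    exact θ.iseqv.trans (ha2 (b x)) (hb2 x)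
  inv_mem' := by
    rintro a ⟨ha, ha2⟩
    refine ⟨S.Dis.inv_mem ha, fun x => ?_⟩
    have h := ha2 (a⁻¹ x)
    rw [show a (a⁻¹ x) = x from Equiv.apply_symm_apply a x] at h
    exact θ.iseqv.symm h

end QuandleStr

/-- The orbit equivalence relation of a subgroup of permutations. -/
def orbSetoid {Q : Type*} (N : Subgroup (Equiv.Perm Q)) : Setoid Q where
  r x y := ∃ n ∈ N, n x = y
  iseqv := by
    refine ⟨fun x => ⟨1, N.one_mem, rfl⟩, ?_, ?_⟩
    · rintro x y ⟨n, hn, rfl⟩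
      exact ⟨n⁻¹, N.inv_mem hn, Equiv.symm_apply_apply n x⟩
    · rintro x y z ⟨n, hn, rfl⟩ ⟨m, hm, rfl⟩
      exact ⟨m * n, N.mul_mem hm hn, Equiv.Perm.mul_apply m n x⟩

/-- The left translation `y ↦ x + f (y - x)` of the affine quandle `Aff(A, f)`. -/
def affL {A : Type*} [AddCommGroup A] (f : A ≃+ A) (x : A) : Equiv.Perm A where
  toFun y := x + f (y - x)
  invFun y := x + f.symm (y - x)
  left_inv y := by simp
  right_inv y := by simp

/-- The affine quandle `Aff(A, f)` with operation `x * y = x + f (y - x)`. -/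
def affQ {A : Type*} [AddCommGroup A] (f : A ≃+ A) : QuandleStr A where
  L := affL f
  idem x := by simp [affL]
  selfDistrib x y z := by
    show x + f ((y + f (z - y)) - x) = (x + f (y - x)) + f ((x + f (z - x)) - (x + f (y - x)))
    simp only [map_sub, map_add]
    abel

/-!
Simplicity turns every `f`-invariant subgroup `B` into `0` or `V`, since the cosets of `B`
form a congruence. Applied to the kernel of `1 - f`: either `f = 1`, and then every
equivalence relation is a congruence, so `|V| ≤ 2`, `p = 2`, and the order of `g` divides
`2! = p`; or `1 - f` is bijective, and then a quandle automorphism is affine,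
`g x = H x + g 0` with `H` additive and commuting with `f`. Applied again to the kernel of
`1 - H`: either `1 - H` is bijective and `x - H x = g 0` is solvable, which is a fixed point;
or `H = 1`, `g` is the translation by `g 0`, and `g ^ p = 1`. A permutation whose order
divides `p` and is coprime to `p` is the identity.
-/

namespace QuandleStr

variable {Q : Type*} (S : QuandleStr Q)

def IsSimple : Prop := ∀ θ : Setoid Q, S.IsCong θ → θ = ⊥ ∨ θ = ⊤

theorem natCard_le_two_of_forall_isCong [Finite Q] (hS : S.IsSimple)
    (hcong : ∀ θ : Setoid Q, S.IsCong θ) : Nat.card Q ≤ 2 := by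
  rcases isEmpty_or_nonempty Q with _ | ⟨⟨a⟩⟩
  · simp
  have hinj : Function.Injective (· = a : Q → Prop) := fun x y hxy => by
    rcases hS (Setoid.ker (· = a)) (hcong _) with hbot | htop
    · have h : Setoid.ker (· = a) x y := Setoid.ker_def.mpr hxy
      rwa [hbot] at h
    · have hx : x = a := by simpa using Setoid.ker_def.mp (Setoid.eq_top_iff.mp htop x a)
      have hy : y = a := by simpa using Setoid.ker_def.mp (Setoid.eq_top_iff.mp htop y a)
      rw [hx, hy]
  simpa using Nat.card_le_card_of_injective _ hinj

end QuandleStr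

section AffineQuandle

variable {A : Type*} [AddCommGroup A] {f : A ≃+ A}

theorem affQ_isCong_of_forall_eq (hf : ∀ x, f x = x) (θ : Setoid A) : (affQ f).IsCong θ := by
  have hL : ∀ x u, (affQ f).L x u = u := fun x u => by
    show x + f (u - x) = u
    rw [hf]; abel
  have hLinv : ∀ x u, ((affQ f).L x)⁻¹ u = u := fun x u => by
    show x + f.symm (u - x) = u
    rw [f.symm_apply_eq.mpr (hf _).symm]; abel
  intro x y u v _ huv
  rw [hL, hL, hLinv, hLinv]
  exact ⟨huv, huv⟩

theorem affQ_isCong_leftRel (B : AddSubgroup A) (hB : ∀ x, f x ∈ B ↔ x ∈ B) :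
    (affQ f).IsCong (QuotientAddGroup.leftRel B) := by
  have hB' : ∀ x, f.symm x ∈ B ↔ x ∈ B := fun x => by
    simpa using (hB (f.symm x)).symm
  intro x y u v hxy huv
  rw [QuotientAddGroup.leftRel_apply] at hxy huv
  constructor
  · show QuotientAddGroup.leftRel B (x + f (u - x)) (y + f (v - y))
    rw [QuotientAddGroup.leftRel_apply]
    have h : -(x + f (u - x)) + (y + f (v - y)) = (-x + y) - f (-x + y) + f (-u + v) := by
      simp only [map_sub, map_add, map_neg]; abel
    rw [h]
    exact B.add_mem (B.sub_mem hxy ((hB _).mpr hxy)) ((hB _).mpr huv)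
  · show QuotientAddGroup.leftRel B (x + f.symm (u - x)) (y + f.symm (v - y))
    rw [QuotientAddGroup.leftRel_apply]
    have h : -(x + f.symm (u - x)) + (y + f.symm (v - y))
        = (-x + y) - f.symm (-x + y) + f.symm (-u + v) := by
      simp only [map_sub, map_add, map_neg]; abel
    rw [h]
    exact B.add_mem (B.sub_mem hxy ((hB' _).mpr hxy)) ((hB' _).mpr huv)

theorem AddSubgroup.eq_bot_or_eq_top_of_affQ_isSimple (hs : (affQ f).IsSimple)
    (B : AddSubgroup A) (hB : ∀ x, f x ∈ B ↔ x ∈ B) : B = ⊥ ∨ B = ⊤ := by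
  rcases hs _ (affQ_isCong_leftRel B hB) with h | h
  · refine Or.inl ((AddSubgroup.eq_bot_iff_forall B).mpr fun x hx => ?_)
    have hr : QuotientAddGroup.leftRel B x 0 := QuotientAddGroup.leftRel_apply.mpr (by simpa)
    rw [h] at hr
    exact hr
  · refine Or.inr ((AddSubgroup.eq_top_iff' B).mpr fun x => ?_)
    have hr : QuotientAddGroup.leftRel B 0 x := by rw [h]; trivial
    simpa using QuotientAddGroup.leftRel_apply.mp hr

theorem surjective_sub_or_eq_id_of_affQ_isSimple [Finite A] (hs : (affQ f).IsSimple)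
    (H : A →+ A) (hH : ∀ x, H (f x) = f (H x)) :
    (Function.Surjective fun x => x - H x) ∨ ∀ x, H x = x := by
  set K := AddMonoidHom.id A - H
  have hK : ∀ x, K x = x - H x := fun _ => rfl
  refine (AddSubgroup.eq_bot_or_eq_top_of_affQ_isSimple hs K.ker fun x => ?_).imp
    (fun hbot => Finite.injective_iff_surjective.mp ((AddMonoidHom.ker_eq_bot_iff K).mp hbot))
    (fun htop x => ?_)
  · simp only [AddMonoidHom.mem_ker, hK, hH, ← map_sub, map_eq_zero_iff _ f.injective]
  · have hx : x ∈ K.ker := htop ▸ AddSubgroup.mem_top x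
    rwa [AddMonoidHom.mem_ker, hK, sub_eq_zero, eq_comm] at hx

theorem exists_addMonoidHom_eq_add_of_map_affQ (g : A → A)
    (hg : ∀ x y, g (x + f (y - x)) = g x + f (g y - g x))
    (hf : Function.Surjective fun x => x - f x) :
    ∃ H : A →+ A, (∀ x, H (f x) = f (H x)) ∧ ∀ x, g x = H x + g 0 := by
  set e := g 0
  have at_sub : ∀ x, g (x - f x) = g x - f (g x) + f e := fun x => by
    have h := hg x 0
    rw [zero_sub, map_neg, ← sub_eq_add_neg] at h
    rw [h, map_sub]; abel
  have at_add_f : ∀ u y, g (u + f y) = g u + f (g y) - f e := fun u y => by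
    -- every `u` is `x - f x`, and `x * y = (x - f x) + f y`
    obtain ⟨x, rfl⟩ := hf u
    have h := hg x y
    rw [map_sub] at h
    rw [show x - f x + f y = x + (f y - f x) by abel, h, at_sub, map_sub]; abel
  have at_f : ∀ y, g (f y) = e + f (g y) - f e := fun y => by
    simpa using at_add_f 0 y
  have at_add : ∀ u z, g (u + z) = g u + g z - e := fun u z => by
    have h := at_add_f u (f.symm z)
    rw [f.apply_symm_apply] at h
    have h' := at_f (f.symm z)
    rw [f.apply_symm_apply] at h'
    rw [h, h']; abel
  refine ⟨AddMonoidHom.mk' (fun x => g x - e) fun a b => by rw [at_add]; abel, fun y => ?_,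
    fun x => by simp⟩
  simp only [AddMonoidHom.mk'_apply, at_f, map_sub]
  abel

end AffineQuandle

theorem stmt9 (p n : ℕ) [Fact p.Prime] (hn : 1 ≤ n)
    (f : (Fin n → ZMod p) ≃+ (Fin n → ZMod p))
    (hsimple : ∀ θ : Setoid (Fin n → ZMod p), (affQ f).IsCong θ → θ = ⊥ ∨ θ = ⊤)
    (g : Equiv.Perm (Fin n → ZMod p))
    (hg : ∀ x y : Fin n → ZMod p, g (x + f (y - x)) = g x + f (g y - g x))
    (hcop : Nat.Coprime (orderOf g) p) :
    ∃ x : Fin n → ZMod p, g x = x := by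
  have fixed_of_dvd : orderOf g ∣ p → ∃ x, g x = x := fun h =>
    ⟨0, by rw [orderOf_eq_one_iff.mp (Nat.Coprime.eq_one_of_dvd hcop h)]; rfl⟩
  rcases surjective_sub_or_eq_id_of_affQ_isSimple hsimple f.toAddMonoidHom (fun _ => rfl)
    with hf | hf
  · obtain ⟨H, hHf, hgH⟩ := exists_addMonoidHom_eq_add_of_map_affQ g hg hf
    rcases surjective_sub_or_eq_id_of_affQ_isSimple hsimple H hHf with hH | hH
    · obtain ⟨x, hx⟩ := hH (g 0)
      exact ⟨x, by rw [hgH, ← hx, add_sub_cancel]⟩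
    · have hgt : g = Equiv.addRight (g 0) := Equiv.ext fun x => by rw [hgH, hH]; rfl
      apply fixed_of_dvd
      apply orderOf_dvd_of_pow_eq_one
      rw [hgt, Equiv.nsmul_addRight, ZModModule.char_nsmul_eq_zero, Equiv.addRight_zero]
  · have hcard := (affQ f).natCard_le_two_of_forall_isCong hsimple (affQ_isCong_of_forall_eq hf)
    have hcardV : Nat.card (Fin n → ZMod p) = p ^ n := by simp
    have hp : p = 2 := le_antisymm
      (le_trans (Nat.le_self_pow (by omega) p) (hcardV ▸ hcard)) (Fact.out : p.Prime).two_le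
    apply fixed_of_dvd
    calc orderOf g ∣ Nat.card (Equiv.Perm (Fin n → ZMod p)) := orderOf_dvd_natCard g
      _ = (Nat.card (Fin n → ZMod p)).factorial := Nat.card_perm
      _ ∣ Nat.factorial 2 := Nat.factorial_dvd_factorial hcard
      _ = p := hp.symm
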